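/- Let G be a cofinitary group, r ∈ 2^ω, and (s,E) a condition of Z_G(r). Then there is a condition (t,E) of Z_G(r) with (t,E) ≤ (s,E) such that t has strictly more closed orbits than s, i.e. |O^c_s| < |O^c_t|. -/

import Mathlib

noncomputable section

/-- Permutations of the natural numbers (elements of `S_∞`). -/
abbrev Perm' := Equiv.Perm ℕ

/-- A letter of a word over `G ∪ {x, x⁻¹}`: either a group element (of `S_∞`),
or `Sum.inr true` standing for `x`, or `Sum.inr false` standing for `x⁻¹`. -/
abbrev Letter := Perm' ⊕ Bool

/-- A word is a list of letters, written left to right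
(the leftmost letter is applied last). -/
abbrev Word := List Letter

/-- A subgroup of `S_∞` is cofinitary if every non-identity element
has only finitely many fixed points. -/
def Cofinitary (G : Subgroup Perm') : Prop :=
  ∀ g ∈ G, g ≠ 1 → {n : ℕ | g n = n}.Finite

/-- A set of pairs is a partial injection (functional and injective). -/
def PartInj (s : Set (ℕ × ℕ)) : Prop :=
  (∀ ⦃a b c⦄, (a, b) ∈ s → (a, c) ∈ s → b = c) ∧
  (∀ ⦃a b c⦄, (a, c) ∈ s → (b, c) ∈ s → a = b)

/-- Domain of a partial injection given as a set of pairs. -/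
def pdom (s : Set (ℕ × ℕ)) : Set ℕ := Prod.fst '' s

/-- Range of a partial injection given as a set of pairs. -/
def pran (s : Set (ℕ × ℕ)) : Set ℕ := Prod.snd '' s

/-- The relation given by substituting the partial injection `s` for `x`
(and `s⁻¹` for `x⁻¹`) in a single letter. -/
def letterRel (s : Set (ℕ × ℕ)) : Letter → ℕ → ℕ → Prop
  | Sum.inl g => fun a b => g a = b
  | Sum.inr true => fun a b => (a, b) ∈ s
  | Sum.inr false => fun a b => (b, a) ∈ s

/-- The relation `w[s]`: evaluation of a word at the partial injection `s`,
composing the letter relations (rightmost letter applied first). -/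
def wordRel (s : Set (ℕ × ℕ)) : Word → ℕ → ℕ → Prop
  | [] => fun a b => a = b
  | l :: w => fun a b => ∃ c, wordRel s w a c ∧ letterRel s l c b

/-- `fix(w[s])`, the set of fixed points of the partial injection `w[s]`. -/
def wordFix (s : Set (ℕ × ℕ)) (w : Word) : Set ℕ := {n | wordRel s w n n}

/-- The word `x^k` for an integer `k` (for `k < 0`, `|k|` copies of `x⁻¹`). -/
def xpow (k : ℤ) : Word :=
  if 0 ≤ k then List.replicate k.toNat (Sum.inr true : Letter)
  else List.replicate (-k).toNat (Sum.inr false : Letter)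

/-- The block `g x^k` as a word. -/
def blockWord (p : Perm' × ℤ) : Word := Sum.inl p.1 :: xpow p.2

/-- `w` is a nice word (member of `W*_G`): `w = x^{k₀}` with `k₀ > 0`, or
`w = g_l x^{k_l} ⋯ g₁ x^{k₁} g₀ x^{k₀}` with `k₀ > 0`, all `k_i ≠ 0` and all
`g_i ∈ G \ {id}`. -/
def IsNice (G : Subgroup Perm') (w : Word) : Prop :=
  (∃ k : ℕ, 0 < k ∧ w = xpow (k : ℤ)) ∨
  (∃ bs : List (Perm' × ℤ), bs ≠ [] ∧
    (∀ p ∈ bs, p.1 ∈ G ∧ p.1 ≠ 1 ∧ p.2 ≠ 0) ∧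
    (∃ p, bs.getLast? = some p ∧ 0 < p.2) ∧
    w = (bs.map blockWord).flatten)

/-- The number of occurrences of `x` or `x⁻¹` in a word. -/
def xOccurrences (w : Word) : ℕ := w.countP (fun l => l.isRight)

/-- `w ∈ W¹_G`: a nice word with exactly one occurrence of `x` or `x⁻¹`. -/
def IsNiceOne (G : Subgroup Perm') (w : Word) : Prop :=
  IsNice G w ∧ xOccurrences w = 1

/-- `(s, E)` is a condition of Zhang's forcing `Z_G`: `s` is a finite partial
injection and `E` a finite set of nice words. -/
def ZCond (G : Subgroup Perm') (s : Set (ℕ × ℕ)) (E : Set Word) : Prop :=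
  s.Finite ∧ PartInj s ∧ E.Finite ∧ ∀ w ∈ E, IsNice G w

/-- `(t, F) ≤ (s, E)` in Zhang's forcing: `s ⊆ t`, `E ⊆ F`, and
`fix(w[t]) = fix(w[s])` for every `w ∈ E`. -/
def ZLe (t : Set (ℕ × ℕ)) (F : Set Word) (s : Set (ℕ × ℕ)) (E : Set Word) : Prop :=
  s ⊆ t ∧ E ⊆ F ∧ ∀ w ∈ E, wordFix t w = wordFix s w

/-- An injective tree: a nonempty set of finite sequences closed under initial
segments, all of whose elements are injective sequences. -/
def IsInjTree (T : Set (List ℕ)) : Prop :=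
  T.Nonempty ∧ (∀ t ∈ T, ∀ s : List ℕ, s <+: t → s ∈ T) ∧ ∀ t ∈ T, t.Nodup

/-- `T ∈ I_i(P)⁺`: an injective tree such that for every `s ∈ T` and every
finite `P₀ ⊆ P` there are `t ∈ T` extending `s` and `k ∈ dom(t) \ dom(s)` with
`t(k) ≠ f(k)` for all `f ∈ P₀`. -/
def TreePos (P : Set Perm') (T : Set (List ℕ)) : Prop :=
  IsInjTree T ∧
  ∀ s ∈ T, ∀ P₀ ⊆ P, P₀.Finite →
    ∃ t ∈ T, s <+: t ∧ ∃ k, s.length ≤ k ∧ k < t.length ∧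
      ∀ f ∈ P₀, t.getD k 0 ≠ f k

/-- A set `O` is closed under a relation `R` and its inverse. -/
def RelClosed (R : ℕ → ℕ → Prop) (O : Set ℕ) : Prop :=
  ∀ a b, R a b → (a ∈ O ↔ b ∈ O)

/-- The orbit of `n` under the (partial injective) relation `R`: the smallest
set containing `n` closed under applications of `R` and `R⁻¹`. -/
def relOrbit (R : ℕ → ℕ → Prop) (n : ℕ) : Set ℕ :=
  ⋂₀ {O : Set ℕ | n ∈ O ∧ RelClosed R O}

/-- The set of all orbits of the relation `R`. -/
def relOrbits (R : ℕ → ℕ → Prop) : Set (Set ℕ) := {O | ∃ n, O = relOrbit R n}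

/-- Domain of a relation. -/
def relDom (R : ℕ → ℕ → Prop) : Set ℕ := {a | ∃ b, R a b}

/-- Range of a relation. -/
def relRan (R : ℕ → ℕ → Prop) : Set ℕ := {b | ∃ a, R a b}

/-- The set of closed orbits of `R`: those orbits contained in `dom ∩ ran`. -/
def relClosedOrbits (R : ℕ → ℕ → Prop) : Set (Set ℕ) :=
  {O ∈ relOrbits R | O ⊆ relDom R ∩ relRan R}

/-- The relation of a partial injection given as a set of pairs. -/
def sRel (s : Set (ℕ × ℕ)) : ℕ → ℕ → Prop := fun a b => (a, b) ∈ s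

/-- The relation (graph) of a permutation of `ℕ`. -/
def permRel (f : Perm') : ℕ → ℕ → Prop := fun a b => f a = b

/-- A partial injection `s` is nice: every closed orbit has its minimum below
the minimum of the complement of the union of all closed orbits. -/
def NiceInj (s : Set (ℕ × ℕ)) : Prop :=
  ∀ O ∈ relClosedOrbits (sRel s),
    sInf O < sInf {n : ℕ | n ∉ ⋃₀ relClosedOrbits (sRel s)}

/-- The position of a closed orbit `O` of `s` in the well-order of closed
orbits by their minima. -/
def orbitIndex (s : Set (ℕ × ℕ)) (O : Set ℕ) : ℕ :=
  {P ∈ relClosedOrbits (sRel s) | sInf P < sInf O}.ncard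

/-- `s` codes `r`, i.e. `o_s ⊆ r`: the `n`-th closed orbit (in the well-order
by minima) has cardinality congruent to `r(n)` mod 2. -/
def CodesReal (s : Set (ℕ × ℕ)) (r : ℕ → Fin 2) : Prop :=
  ∀ O ∈ relClosedOrbits (sRel s), O.ncard % 2 = (r (orbitIndex s O) : ℕ)

/-- `(s, E)` is a condition of `Z_G(r)`. -/
def ZrCond (G : Subgroup Perm') (r : ℕ → Fin 2)
    (s : Set (ℕ × ℕ)) (E : Set Word) : Prop :=
  ZCond G s E ∧ NiceInj s ∧ CodesReal s r

/-- The `n`-th prime. -/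
def pPrime (n : ℕ) : ℕ := Nat.nth Nat.Prime n

/-- The orbit-coding function `o†`: `o†(n)` is the number of closed orbits of
`R` of cardinality `p_n`, modulo 2. -/
def odag (R : ℕ → ℕ → Prop) (n : ℕ) : ℕ :=
  {O ∈ relClosedOrbits R | O.ncard = pPrime n}.ncard % 2

/-- `v^k`: the word `v` concatenated `k` times. -/
def wpow (v : Word) (k : ℕ) : Word := (List.replicate k v).flatten

/-- `w ∈ W†_G`: a nice word that is indecomposable, i.e. not of the form `v^k`
for a nice word `v` and `k > 1`. -/
def Indecomposable (G : Subgroup Perm') (w : Word) : Prop :=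
  IsNice G w ∧ ¬∃ v : Word, IsNice G v ∧ ∃ k : ℕ, 1 < k ∧ w = wpow v k

/-- The inverse of a letter. -/
def letterInv : Letter → Letter
  | Sum.inl g => Sum.inl g⁻¹
  | Sum.inr b => Sum.inr (!b)

/-- The inverse of a word. -/
def wordInv (w : Word) : Word := (w.map letterInv).reverse

/-- `E` is closed under cyclic permutations and inverses thereof within `W*_G`. -/
def CyclClosed (G : Subgroup Perm') (E : Set Word) : Prop :=
  ∀ w ∈ E, ∀ w₀ w₁ : Word, w = w₀ ++ w₁ →
    (IsNice G (w₁ ++ w₀) → w₁ ++ w₀ ∈ E) ∧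
    (IsNice G (wordInv (w₁ ++ w₀)) → wordInv (w₁ ++ w₀) ∈ E)

/-- `(s, E)` is a condition of `Z†_G(r)`: a Zhang condition such that `E` is
closed under cyclic permutations and inverses thereof in `W*_G`, and whenever
`w = v^k ∈ E` with `v ∈ W†_G` then `v^l ∈ E` for all `0 < l ≤ k` and `o†_{v[s]}`
codes `r` up to `n` for every `n` with `p_n ≤ k`. -/
def ZdagCond (G : Subgroup Perm') (r : ℕ → Fin 2)
    (s : Set (ℕ × ℕ)) (E : Set Word) : Prop :=
  ZCond G s E ∧ CyclClosed G E ∧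
  ∀ w ∈ E, ∀ v : Word, ∀ k : ℕ, Indecomposable G v → w = wpow v k →
    (∀ l : ℕ, 0 < l → l ≤ k → wpow v l ∈ E) ∧
    (∀ n : ℕ, pPrime n ≤ k → ∀ i ≤ n, odag (wordRel s v) i = (r i : ℕ))

/-- Substituting the permutation `f` for `x` in a letter. -/
def letterPerm (f : Perm') : Letter → Perm'
  | Sum.inl g => g
  | Sum.inr true => f
  | Sum.inr false => f⁻¹

/-- `w[f]`: evaluation of a word at the permutation `f`. -/
def wordPerm (f : Perm') (w : Word) : Perm' := (w.map (letterPerm f)).prod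

/-- Two functions are eventually different. -/
def EvDiff (f g : ℕ → ℕ) : Prop := {k : ℕ | f k = g k}.Finite

/-- A set of permutations is an eventually different family. -/
def EDFamily (P : Set Perm') : Prop :=
  ∀ f ∈ P, ∀ g ∈ P, f ≠ g → EvDiff f g

/-!
Let `m` be the least point outside the closed orbits of `s`. As `s` is nice, every closed orbit
has a smaller minimum, and the orbit of `m` is not closed, so it is a path `p 0 → ⋯ → p q`.
Closing this path into a cycle through `j` fresh points adds exactly one closed orbit, which comes
last in the order by minima, and `j` can be chosen so that its size `q + 1 + j` has the parity
`r` prescribes. No word `w ∈ E` gains fixed points if `j` is at least the number of `x`-letters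
of `w` and the fresh points are moved by the group letters of `E` away from the old points and from
each other: a walk along `w` that enters the new points can leave them only by a group letter, which
throws it out of the domain, or by running through all `j` of them in one block of `x`'s.
-/

section Words

variable {s t : Set (ℕ × ℕ)}

lemma letterRel_mono (hst : s ⊆ t) :
    ∀ (l : Letter) {a b : ℕ}, letterRel s l a b → letterRel t l a b
  | Sum.inl _, _, _, h => h
  | Sum.inr true, _, _, h => hst h
  | Sum.inr false, _, _, h => hst h

lemma wordRel_mono (hst : s ⊆ t) :
    ∀ (v : Word) {a b : ℕ}, wordRel s v a b → wordRel t v a b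
  | [], _, _, h => h
  | l :: v, _, _, ⟨c, h₁, h₂⟩ => ⟨c, wordRel_mono hst v h₁, letterRel_mono hst l h₂⟩

lemma wordRel_append (s : Set (ℕ × ℕ)) (v w : Word) (a b : ℕ) :
    wordRel s (v ++ w) a b ↔ ∃ c, wordRel s w a c ∧ wordRel s v c b := by
  induction v generalizing b with
  | nil => simp [wordRel]
  | cons l v ih =>
    simp only [List.cons_append, wordRel, ih]
    exact ⟨fun ⟨c, ⟨d, hd, hdc⟩, hc⟩ => ⟨d, hd, c, hdc, hc⟩,
      fun ⟨d, hd, c, hdc, hc⟩ => ⟨c, ⟨d, hd, hdc⟩, hc⟩⟩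

lemma mem_pdom_of_wordRel_of_getLast? {v : Word} {a b : ℕ} (h : wordRel s v a b)
    (hv : v.getLast? = some (Sum.inr true)) : a ∈ pdom s := by
  obtain ⟨v', rfl⟩ := List.getLast?_eq_some_iff.mp hv
  obtain ⟨c, ⟨_, rfl, hac⟩, -⟩ := (wordRel_append s v' _ a b).mp h
  exact ⟨_, hac, rfl⟩

end Words

section Orbits

variable {R R' : ℕ → ℕ → Prop} {n m : ℕ} {O : Set ℕ}

open Relation in
lemma relOrbit_eq_setOf_eqvGen (R : ℕ → ℕ → Prop) (n : ℕ) :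
    relOrbit R n = {m | EqvGen R n m} := by
  ext m
  refine ⟨fun hm => hm _ ⟨EqvGen.refl n, fun a b hab =>
    ⟨fun ha => ha.trans _ _ _ (.rel _ _ hab), fun hb => hb.trans _ _ _ (.symm _ _ (.rel _ _ hab))⟩⟩,
    fun hm O ⟨hn, hO⟩ => ?_⟩
  suffices ∀ a b, EqvGen R a b → (a ∈ O ↔ b ∈ O) from (this n m hm).1 hn
  intro a b hab
  induction hab with
  | rel a b h => exact hO a b h
  | refl => rfl
  | symm _ _ _ ih => exact ih.symm
  | trans _ _ _ _ _ ih₁ ih₂ => exact ih₁.trans ih₂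

lemma mem_relOrbit_self (R : ℕ → ℕ → Prop) (n : ℕ) : n ∈ relOrbit R n :=
  fun _ hO => hO.1

lemma relOrbit_subset_of_relClosed (hn : n ∈ O) (hO : RelClosed R O) : relOrbit R n ⊆ O :=
  fun _ hm => hm O ⟨hn, hO⟩

lemma relClosed_relOrbit (R : ℕ → ℕ → Prop) (n : ℕ) : RelClosed R (relOrbit R n) := by
  intro a b hab
  simp only [relOrbit_eq_setOf_eqvGen, Set.mem_ofPred_eq]
  exact ⟨fun ha => ha.trans _ _ _ (.rel _ _ hab),
    fun hb => hb.trans _ _ _ (.symm _ _ (.rel _ _ hab))⟩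

lemma relOrbit_eq_of_mem (h : m ∈ relOrbit R n) : relOrbit R m = relOrbit R n := by
  simp only [relOrbit_eq_setOf_eqvGen, Set.mem_ofPred_eq] at h ⊢
  ext x
  exact ⟨fun hx => h.trans _ _ _ hx, fun hx => h.symm.trans _ _ _ hx⟩

lemma relOrbit_eq_of_relClosed (hn : n ∈ O) (hO : RelClosed R O) (hsub : O ⊆ relOrbit R n) :
    relOrbit R n = O :=
  (relOrbit_subset_of_relClosed hn hO).antisymm hsub

lemma relOrbit_mono (h : ∀ a b, R a b → R' a b) (n : ℕ) : relOrbit R n ⊆ relOrbit R' n := by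
  simp only [relOrbit_eq_setOf_eqvGen]
  exact fun m hm => Relation.EqvGen.mono h _ _ hm

end Orbits

section ClosedOrbits

variable {s : Set (ℕ × ℕ)} {O : Set ℕ}

lemma relDom_sRel (s : Set (ℕ × ℕ)) : relDom (sRel s) = pdom s := by
  ext a
  exact ⟨fun ⟨b, h⟩ => ⟨(a, b), h, rfl⟩, fun ⟨⟨_, b⟩, h, ha⟩ => ⟨b, ha ▸ h⟩⟩

lemma relRan_sRel (s : Set (ℕ × ℕ)) : relRan (sRel s) = pran s := by
  ext b
  exact ⟨fun ⟨a, h⟩ => ⟨(a, b), h, rfl⟩, fun ⟨⟨a, _⟩, h, hb⟩ => ⟨a, hb ▸ h⟩⟩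

lemma relOrbit_sRel_finite (hs : s.Finite) (n : ℕ) : (relOrbit (sRel s) n).Finite := by
  refine (((hs.image Prod.fst).union (hs.image Prod.snd)).insert n).subset
    (relOrbit_subset_of_relClosed (Set.mem_insert n _) fun a b hab => ?_)
  exact ⟨fun _ => Or.inr (Or.inr ⟨(a, b), hab, rfl⟩),
    fun _ => Or.inr (Or.inl ⟨(a, b), hab, rfl⟩)⟩

lemma subset_pdom_of_mem_relClosedOrbits (hO : O ∈ relClosedOrbits (sRel s)) : O ⊆ pdom s :=
  fun _ hx => relDom_sRel s ▸ (hO.2 hx).1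

lemma relClosedOrbits_sRel_finite (hs : s.Finite) : (relClosedOrbits (sRel s)).Finite :=
  (hs.image Prod.fst).finite_subsets.subset fun _ hO => subset_pdom_of_mem_relClosedOrbits hO

lemma sUnion_relClosedOrbits_sRel_finite (hs : s.Finite) :
    (⋃₀ relClosedOrbits (sRel s)).Finite :=
  (relClosedOrbits_sRel_finite hs).sUnion fun _ hO =>
    (hs.image Prod.fst).subset (subset_pdom_of_mem_relClosedOrbits hO)

end ClosedOrbits

section Paths

variable {s : Set (ℕ × ℕ)} {O : Set ℕ} {n b : ℕ}

/-- `s` restricts to a bijection from `O ∩ dom s` onto `O ∩ ran s`. -/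
lemma ncard_inter_pdom_eq_ncard_inter_pran (hs : PartInj s) (hO : RelClosed (sRel s) O) :
    (O ∩ pdom s).ncard = (O ∩ pran s).ncard := by
  let S := {z ∈ s | z.1 ∈ O}
  have hdom : O ∩ pdom s = Prod.fst '' S := by
    ext x
    exact ⟨fun ⟨hx, z, hz, hzx⟩ => ⟨z, ⟨hz, hzx ▸ hx⟩, hzx⟩,
      fun ⟨z, ⟨hz, hzO⟩, hzx⟩ => ⟨hzx ▸ hzO, z, hz, hzx⟩⟩
  have hran : O ∩ pran s = Prod.snd '' S := by
    ext x
    exact ⟨fun ⟨hx, z, hz, hzx⟩ => ⟨z, ⟨hz, (hO _ _ hz).2 (hzx ▸ hx)⟩, hzx⟩,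
      fun ⟨z, ⟨hz, hzO⟩, hzx⟩ => ⟨hzx ▸ (hO _ _ hz).1 hzO, z, hz, hzx⟩⟩
  rw [hdom, hran, Set.InjOn.ncard_image, Set.InjOn.ncard_image]
  · rintro ⟨a, b⟩ ⟨h, -⟩ ⟨a', b'⟩ ⟨h', -⟩ (rfl : b = b')
    rw [hs.2 h h']
  · rintro ⟨a, b⟩ ⟨h, -⟩ ⟨a', b'⟩ ⟨h', -⟩ (rfl : a = a')
    rw [hs.1 h h']

lemma exists_mem_relOrbit_notMem_pran (hs : PartInj s) (hfin : s.Finite)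
    (hn : relOrbit (sRel s) n ∉ relClosedOrbits (sRel s)) :
    ∃ b ∈ relOrbit (sRel s) n, b ∉ pran s := by
  by_contra! hran
  have hdom : relOrbit (sRel s) n ∩ pdom s = relOrbit (sRel s) n := by
    refine Set.eq_of_subset_of_ncard_le Set.inter_subset_left ?_ (relOrbit_sRel_finite hfin n)
    rw [ncard_inter_pdom_eq_ncard_inter_pran hs (relClosed_relOrbit _ n),
      Set.inter_eq_left.mpr hran]
  refine hn ⟨⟨n, rfl⟩, fun x hx => ?_⟩
  rw [relDom_sRel, relRan_sRel]
  rw [← hdom] at hx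
  exact ⟨hx.2, hran x hx.1⟩

lemma PartInj.injective_of_chain (hs : PartInj s) {p : ℕ → ℕ}
    (hp : ∀ i, (p i, p (i + 1)) ∈ s) (h0 : p 0 ∉ pran s) : p.Injective := by
  have hran : ∀ i, p (i + 1) ∈ pran s := fun i => ⟨_, hp i, rfl⟩
  intro i i' h
  induction i generalizing i' with
  | zero => cases i' with
    | zero => rfl
    | succ k => exact absurd (h ▸ hran k) h0
  | succ i ih => cases i' with
    | zero => exact absurd (h.symm ▸ hran i) h0
    | succ k => exact congrArg (· + 1) (ih (hs.2 (hp i) (h ▸ hp k)))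

open Classical in
def pSucc (s : Set (ℕ × ℕ)) (a : ℕ) : ℕ :=
  if h : ∃ b, (a, b) ∈ s then h.choose else a

lemma pSucc_mem {a : ℕ} (ha : a ∈ pdom s) : (a, pSucc s a) ∈ s := by
  have h : ∃ b, (a, b) ∈ s := let ⟨z, hz, hza⟩ := ha; ⟨z.2, hza ▸ hz⟩
  rw [pSucc, dif_pos h]
  exact h.choose_spec

/-- Otherwise the walk would be an injective sequence inside the finite orbit of `b`. -/
lemma exists_iterate_pSucc_notMem_pdom (hs : PartInj s) (hfin : s.Finite) (hb : b ∉ pran s) :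
    ∃ k, (pSucc s)^[k] b ∉ pdom s := by
  by_contra! hdom
  have hstep : ∀ i, ((pSucc s)^[i] b, (pSucc s)^[i + 1] b) ∈ s := fun i => by
    rw [Function.iterate_succ_apply']
    exact pSucc_mem (hdom i)
  have hrange : Set.range (fun i => (pSucc s)^[i] b) ⊆ relOrbit (sRel s) b := by
    rintro _ ⟨i, rfl⟩
    induction i with
    | zero => exact mem_relOrbit_self _ b
    | succ i ih => exact (relClosed_relOrbit _ b _ _ (hstep i)).1 ih
  exact Set.infinite_range_of_injective (hs.injective_of_chain hstep hb)
    ((relOrbit_sRel_finite hfin b).subset hrange)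

theorem exists_path_of_notMem_relClosedOrbits (hs : PartInj s) (hfin : s.Finite)
    (hn : relOrbit (sRel s) n ∉ relClosedOrbits (sRel s)) :
    ∃ (p : ℕ → ℕ) (q : ℕ), (∀ i < q, (p i, p (i + 1)) ∈ s) ∧ p 0 ∉ pran s ∧
      p q ∉ pdom s ∧ relOrbit (sRel s) n = p '' Set.Iic q := by
  classical
  obtain ⟨b, hbn, hb⟩ := exists_mem_relOrbit_notMem_pran hs hfin hn
  have hex := exists_iterate_pSucc_notMem_pdom hs hfin hb
  set p := fun i => (pSucc s)^[i] b
  set q := Nat.find hex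
  have hstep : ∀ i < q, (p i, p (i + 1)) ∈ s := fun i hi => by
    simp only [p, Function.iterate_succ_apply']
    exact pSucc_mem (not_not.mp (Nat.find_min hex hi))
  have hq : p q ∉ pdom s := Nat.find_spec hex
  refine ⟨p, q, hstep, hb, hq, ?_⟩
  rw [← relOrbit_eq_of_mem hbn]
  refine relOrbit_eq_of_relClosed ⟨0, Nat.zero_le q, rfl⟩ (fun x y hxy => ⟨?_, ?_⟩) ?_
  · rintro ⟨i, hi, rfl⟩
    have hiq : i < q := lt_of_le_of_ne hi fun h => hq (h ▸ ⟨(p i, y), hxy, rfl⟩)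
    exact ⟨i + 1, hiq, hs.1 (hstep i hiq) hxy⟩
  · rintro ⟨i, hi, rfl⟩
    cases i with
    | zero => exact absurd ⟨_, hxy, rfl⟩ hb
    | succ i => exact ⟨i, by simp only [Set.mem_Iic] at hi ⊢; omega, hs.2 (hstep i hi) hxy⟩
  · rintro _ ⟨i, hi, rfl⟩
    induction i with
    | zero => exact mem_relOrbit_self _ b
    | succ i ih =>
      exact (relClosed_relOrbit _ b _ _ (hstep i hi)).1 (ih (Nat.le_of_succ_le hi))

end Paths

section NiceWords

def CompatLetters : Letter → Letter → Prop
  | Sum.inl _, Sum.inl _ => False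
  | Sum.inr σ, Sum.inr τ => σ = τ
  | _, _ => True

lemma xOccurrences_cons_inr (σ : Bool) (v : Word) :
    xOccurrences (Sum.inr σ :: v) = xOccurrences v + 1 := by
  simp [xOccurrences, List.countP_cons]

lemma xOccurrences_replicate (σ : Bool) (k : ℕ) :
    xOccurrences (List.replicate k (Sum.inr σ)) = k := by
  induction k with
  | zero => rfl
  | succ k ih => rw [List.replicate_succ, xOccurrences_cons_inr, ih]

lemma xpow_natCast (k : ℕ) : xpow (k : ℤ) = List.replicate k (Sum.inr true) := by
  simp [xpow]

lemma xpow_eq_replicate {k : ℤ} (hk : k ≠ 0) :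
    ∃ n σ, 0 < n ∧ xpow k = List.replicate n (Sum.inr σ) ∧ (0 < k → σ = true) := by
  rcases le_or_gt 0 k with h | h
  · exact ⟨k.toNat, true, by omega, by rw [xpow, if_pos h], fun _ => rfl⟩
  · exact ⟨(-k).toNat, false, by omega, by rw [xpow, if_neg (by omega)], by omega⟩

lemma blockWord_eq_cons_replicate {p : Perm' × ℤ} (hp : p.2 ≠ 0) :
    ∃ n σ, 0 < n ∧ blockWord p = Sum.inl p.1 :: List.replicate n (Sum.inr σ) ∧
      (0 < p.2 → σ = true) := by
  obtain ⟨n, σ, hn, heq, hσ⟩ := xpow_eq_replicate hp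
  exact ⟨n, σ, hn, by rw [blockWord, heq], hσ⟩

variable {G : Subgroup Perm'} {w : Word}

lemma IsNice.isChain (hw : IsNice G w) : w.IsChain CompatLetters := by
  rcases hw with ⟨k, -, rfl⟩ | ⟨bs, -, hbs, -, rfl⟩
  · rw [xpow_natCast]
    exact List.isChain_replicate_of_rel k rfl
  have hblock : ∀ p ∈ bs, ∃ n σ, 0 < n ∧
      blockWord p = Sum.inl p.1 :: List.replicate n (Sum.inr σ) := fun p hp =>
    let ⟨n, σ, hn, heq, _⟩ := blockWord_eq_cons_replicate (hbs p hp).2.2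
    ⟨n, σ, hn, heq⟩
  rw [List.isChain_flatten (by simp [blockWord])]
  refine ⟨?_, List.Pairwise.isChain (List.pairwise_of_forall_mem_list ?_)⟩
  · simp only [List.mem_map]
    rintro _ ⟨p, hp, rfl⟩
    obtain ⟨n, σ, hn, heq⟩ := hblock p hp
    rw [heq, List.isChain_cons]
    refine ⟨?_, List.isChain_replicate_of_rel n rfl⟩
    obtain ⟨n, rfl⟩ := Nat.exists_eq_add_one_of_ne_zero hn.ne'
    simp [List.replicate_succ, CompatLetters]
  · simp only [List.mem_map]
    rintro _ ⟨p, hp, rfl⟩ _ ⟨p', hp', rfl⟩ x hx y hy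
    obtain ⟨n, σ, hn, heq⟩ := hblock p hp
    obtain ⟨n', σ', -, heq'⟩ := hblock p' hp'
    obtain ⟨n, rfl⟩ := Nat.exists_eq_add_one_of_ne_zero hn.ne'
    rw [heq, List.replicate_succ', ← List.cons_append, List.getLast?_concat] at hx
    rw [heq', List.head?_cons] at hy
    cases hx
    cases hy
    trivial

lemma IsNice.getLast? (hw : IsNice G w) : w.getLast? = some (Sum.inr true) := by
  rcases hw with ⟨k, hk, rfl⟩ | ⟨bs, -, hbs, ⟨p, hp, hpos⟩, rfl⟩
  · obtain ⟨k, rfl⟩ := Nat.exists_eq_add_one_of_ne_zero hk.ne'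
    rw [xpow_natCast, List.replicate_succ', List.getLast?_concat]
  obtain ⟨bs', rfl⟩ := List.getLast?_eq_some_iff.mp hp
  obtain ⟨n, σ, hn, heq, hσ⟩ :=
    blockWord_eq_cons_replicate (hbs p (List.mem_append_right _ (List.mem_singleton_self p))).2.2
  obtain ⟨n, rfl⟩ := Nat.exists_eq_add_one_of_ne_zero hn.ne'
  rw [List.map_append, List.flatten_append, List.getLast?_append_of_ne_nil _ (by simp [blockWord]),
    List.map_singleton, List.flatten_singleton, heq, List.replicate_succ', ← List.cons_append,
    List.getLast?_concat, hσ hpos]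

lemma IsNice.mem_of_inl_mem (hw : IsNice G w) {g : Perm'} (hg : Sum.inl g ∈ w) :
    g ∈ G ∧ g ≠ 1 := by
  rcases hw with ⟨k, -, rfl⟩ | ⟨bs, -, hbs, -, rfl⟩
  · simp [xpow_natCast, List.mem_replicate] at hg
  obtain ⟨_, hl, hgp⟩ := List.mem_flatten.mp hg
  obtain ⟨p, hp, rfl⟩ := List.mem_map.mp hl
  obtain ⟨n, σ, -, heq, -⟩ := blockWord_eq_cons_replicate (hbs p hp).2.2
  rw [heq] at hgp
  simp only [List.mem_cons, Sum.inl.injEq, List.mem_replicate] at hgp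
  rcases hgp with rfl | ⟨-, h⟩
  · exact ⟨(hbs p hp).1, (hbs p hp).2.1⟩
  · cases h

lemma IsNice.eq_replicate_or_eq_cons (hw : IsNice G w) :
    (∃ k, 0 < k ∧ w = List.replicate k (Sum.inr true)) ∨
      ∃ g w₁ σ, w = Sum.inl g :: w₁ ∧ w₁.head? = some (Sum.inr σ) := by
  rcases hw with ⟨k, hk, rfl⟩ | ⟨_ | ⟨p, bs⟩, hne, hbs, -, rfl⟩
  · exact Or.inl ⟨k, hk, xpow_natCast k⟩
  · exact absurd rfl hne
  obtain ⟨n, σ, hn, heq, -⟩ := blockWord_eq_cons_replicate (hbs p List.mem_cons_self).2.2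
  obtain ⟨n, rfl⟩ := Nat.exists_eq_add_one_of_ne_zero hn.ne'
  refine Or.inr ⟨p.1, Sum.inr σ :: (List.replicate n (Sum.inr σ) ++ (bs.map blockWord).flatten),
    σ, ?_, rfl⟩
  rw [List.map_cons, List.flatten_cons, heq, List.cons_append, List.replicate_succ,
    List.cons_append]

end NiceWords

section Bridge

def bridgePairs (c : ℕ → ℕ) (j : ℕ) : Set (ℕ × ℕ) :=
  (fun i => (c i, c (i + 1))) '' Set.Iic j

lemma PartInj.union {s u : Set (ℕ × ℕ)} (hs : PartInj s) (hu : PartInj u)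
    (hdom : Disjoint (pdom s) (pdom u)) (hran : Disjoint (pran s) (pran u)) :
    PartInj (s ∪ u) := by
  constructor
  · rintro a b b' (h | h) (h' | h')
    · exact hs.1 h h'
    · exact (Set.disjoint_left.mp hdom ⟨_, h, rfl⟩ ⟨_, h', rfl⟩).elim
    · exact (Set.disjoint_left.mp hdom ⟨_, h', rfl⟩ ⟨_, h, rfl⟩).elim
    · exact hu.1 h h'
  · rintro a a' b (h | h) (h' | h')
    · exact hs.2 h h'
    · exact (Set.disjoint_left.mp hran ⟨_, h, rfl⟩ ⟨_, h', rfl⟩).elim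
    · exact (Set.disjoint_left.mp hran ⟨_, h', rfl⟩ ⟨_, h, rfl⟩).elim
    · exact hu.2 h h'

/-- `c 1, …, c j` are fresh points that will bridge the end `c 0` of a path of `s` back to its
start `c (j + 1)`. -/
structure FreshBridge (s : Set (ℕ × ℕ)) (c : ℕ → ℕ) (j : ℕ) (D : Set ℕ)
    (GS : Set Perm') : Prop where
  one_le : 1 ≤ j
  pdom_subset : pdom s ⊆ D
  pran_subset : pran s ⊆ D
  start_mem : c 0 ∈ D
  end_mem : c (j + 1) ∈ D
  start_notMem_pdom : c 0 ∉ pdom s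
  end_notMem_pran : c (j + 1) ∉ pran s
  notMem : ∀ i ∈ Set.Icc 1 j, c i ∉ D
  injOn : Set.InjOn c (Set.Icc 1 j)
  apply_notMem : ∀ g ∈ GS, ∀ i ∈ Set.Icc 1 j, g (c i) ∉ D ∪ c '' Set.Icc 1 j
  inv_apply_notMem : ∀ g ∈ GS, ∀ i ∈ Set.Icc 1 j, g⁻¹ (c i) ∉ D

namespace FreshBridge

variable {s : Set (ℕ × ℕ)} {c : ℕ → ℕ} {j : ℕ} {D : Set ℕ} {GS : Set Perm'}

lemma notMem_image_of_mem (hb : FreshBridge s c j D GS) {x : ℕ} (hx : x ∈ D) :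
    x ∉ c '' Set.Icc 1 j := by
  rintro ⟨i, hi, rfl⟩
  exact hb.notMem i hi hx

lemma eq_of_apply_eq (hb : FreshBridge s c j D GS) {k k' : ℕ} (hk : k ≤ j + 1)
    (hk' : k' ≤ j + 1)
    (hmem : k ∈ Set.Icc 1 j ∨ k' ∈ Set.Icc 1 j) (h : c k = c k') : k = k' := by
  wlog hkj : k ∈ Set.Icc 1 j generalizing k k'
  · exact (this hk' hk hmem.symm h.symm (hmem.resolve_left hkj)).symm
  rcases Nat.eq_zero_or_pos k' with rfl | hk'0
  · exact absurd (h ▸ hb.start_mem) (hb.notMem k hkj)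
  rcases hk'.lt_or_eq with hk'j | rfl
  · exact hb.injOn hkj ⟨hk'0, by omega⟩ h
  · exact absurd (h ▸ hb.end_mem) (hb.notMem k hkj)

lemma partInj_bridgePairs (hb : FreshBridge s c j D GS) : PartInj (bridgePairs c j) := by
  constructor
  · rintro a b b' ⟨i, hi, hab⟩ ⟨i', hi', hab'⟩
    simp only [Prod.mk.injEq, Set.mem_Iic] at hab hab' hi hi'
    have hcc := hab.1.trans hab'.1.symm
    have : i = i' := by
      rcases Nat.eq_zero_or_pos i with rfl | hi0
      · rcases Nat.eq_zero_or_pos i' with rfl | hi'0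
        · rfl
        · exact hb.eq_of_apply_eq (by omega) (by omega) (Or.inr ⟨hi'0, hi'⟩) hcc
      · exact hb.eq_of_apply_eq (by omega) (by omega) (Or.inl ⟨hi0, hi⟩) hcc
    rw [← hab.2, ← hab'.2, this]
  · rintro a a' b ⟨i, hi, hab⟩ ⟨i', hi', hab'⟩
    simp only [Prod.mk.injEq, Set.mem_Iic] at hab hab' hi hi'
    have hcc := hab.2.trans hab'.2.symm
    have : i + 1 = i' + 1 := by
      rcases hi.lt_or_eq with hij | rfl
      · exact hb.eq_of_apply_eq (by omega) (by omega) (Or.inl ⟨by omega, hij⟩) hcc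
      rcases hi'.lt_or_eq with hi'j | rfl
      · exact hb.eq_of_apply_eq (by omega) (by omega) (Or.inr ⟨by omega, hi'j⟩) hcc
      · rfl
    rw [← hab.1, ← hab'.1, Nat.succ_injective this]

lemma pdom_union_subset (hb : FreshBridge s c j D GS) :
    pdom (s ∪ bridgePairs c j) ⊆ D ∪ c '' Set.Icc 1 j := by
  rintro _ ⟨z, hz | ⟨i, hi, rfl⟩, rfl⟩
  · exact Or.inl (hb.pdom_subset ⟨z, hz, rfl⟩)
  rcases Nat.eq_zero_or_pos i with rfl | hi0
  · exact Or.inl hb.start_mem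
  · exact Or.inr ⟨i, ⟨hi0, hi⟩, rfl⟩

lemma pran_union_subset (hb : FreshBridge s c j D GS) :
    pran (s ∪ bridgePairs c j) ⊆ D ∪ c '' Set.Icc 1 j := by
  rintro _ ⟨z, hz | ⟨i, hi, rfl⟩, rfl⟩
  · exact Or.inl (hb.pran_subset ⟨z, hz, rfl⟩)
  rcases (Set.mem_Iic.mp hi).lt_or_eq with hij | rfl
  · exact Or.inr ⟨i + 1, ⟨by omega, hij⟩, rfl⟩
  · exact Or.inl hb.end_mem

lemma partInj_union (hb : FreshBridge s c j D GS) (hs : PartInj s) :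
    PartInj (s ∪ bridgePairs c j) := by
  refine hs.union hb.partInj_bridgePairs (Set.disjoint_left.mpr ?_) (Set.disjoint_left.mpr ?_)
  · rintro x hxs ⟨_, ⟨i, hi, rfl⟩, rfl⟩
    rcases Nat.eq_zero_or_pos i with rfl | hi0
    · exact hb.start_notMem_pdom hxs
    · exact hb.notMem i ⟨hi0, hi⟩ (hb.pdom_subset hxs)
  · rintro x hxs ⟨_, ⟨i, hi, rfl⟩, rfl⟩
    rcases (Set.mem_Iic.mp hi).lt_or_eq with hij | rfl
    · exact hb.notMem (i + 1) ⟨by omega, hij⟩ (hb.pran_subset hxs)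
    · exact hb.end_notMem_pran hxs

end FreshBridge

end Bridge

section BridgeWalks

/-- Where a walk along `v` from `n ∈ D` in `s ∪ bridgePairs c j` can be: it is an `s`-walk off
the bridge; or it is at the bridge point `c i`, having entered the bridge at the end opposite to the
direction of its last letter `x^{±1}` (which took at least `i`, resp. `j + 1 - i`, letters); or a
group letter has thrown it out of `D` and off the bridge. -/
def BridgeState (s : Set (ℕ × ℕ)) (c : ℕ → ℕ) (j : ℕ) (D : Set ℕ) (n : ℕ) (v : Word)
    (y : ℕ) : Prop :=
  (wordRel s v n y ∧ y ∉ c '' Set.Icc 1 j) ∨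
  (∃ i ∈ Set.Icc 1 j, y = c i ∧
    (v.head? = some (Sum.inr true) ∧ i ≤ xOccurrences v ∨
      v.head? = some (Sum.inr false) ∧ j + 1 - i ≤ xOccurrences v)) ∨
  (y ∉ D ∧ y ∉ c '' Set.Icc 1 j ∧ ∃ g, v.head? = some (Sum.inl g))

namespace FreshBridge

variable {s : Set (ℕ × ℕ)} {c : ℕ → ℕ} {j : ℕ} {D : Set ℕ} {GS : Set Perm'}
  {n y y' : ℕ} {v : Word}

lemma mem_of_wordRel (hb : FreshBridge s c j D GS) (hn : n ∈ D) (h : wordRel s v n y)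
    (hv : ∀ g, v.head? ≠ some (Sum.inl g)) : y ∈ D := by
  match v, h with
  | [], h => exact h ▸ hn
  | Sum.inl g :: _, _ => exact absurd rfl (hv g)
  | Sum.inr true :: _, ⟨_, _, hzy⟩ => exact hb.pran_subset ⟨_, hzy, rfl⟩
  | Sum.inr false :: _, ⟨_, _, hyz⟩ => exact hb.pdom_subset ⟨_, hyz, rfl⟩

lemma bridgeState_cons_inl (hb : FreshBridge s c j D GS) (hn : n ∈ D) {g : Perm'} (hg : g ∈ GS)
    (hv : ∀ l ∈ v.head?, CompatLetters (Sum.inl g) l) (h : BridgeState s c j D n v y) :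
    BridgeState s c j D n (Sum.inl g :: v) (g y) := by
  rcases h with ⟨hw, -⟩ | ⟨i, hi, rfl, -⟩ | ⟨-, -, g', hg'⟩
  · have hyD : y ∈ D := hb.mem_of_wordRel hn hw fun g' hg' => hv _ hg'
    refine Or.inl ⟨⟨y, hw, rfl⟩, ?_⟩
    rintro ⟨i, hi, hgy⟩
    apply hb.inv_apply_notMem g hg i hi
    rwa [hgy, Equiv.Perm.coe_inv, Equiv.symm_apply_apply]
  · have := hb.apply_notMem g hg i hi
    exact Or.inr (Or.inr ⟨fun h => this (Or.inl h), fun h => this (Or.inr h), g, rfl⟩)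
  · exact (hv _ hg' : False).elim

lemma bridgeState_cons_inr_true (hb : FreshBridge s c j D GS)
    (hv : ∀ l ∈ v.head?, CompatLetters (Sum.inr true) l) (hj : xOccurrences v + 1 ≤ j)
    (hyy : (y, y') ∈ s ∪ bridgePairs c j) (h : BridgeState s c j D n v y) :
    BridgeState s c j D n (Sum.inr true :: v) y' := by
  rcases h with ⟨hw, hyF⟩ | ⟨i, hi, rfl, hdir⟩ | ⟨hyD, hyF, -⟩
  · rcases hyy with hyy | ⟨k, hk, hkyy⟩
    · exact Or.inl ⟨⟨y, hw, hyy⟩,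
        hb.notMem_image_of_mem (hb.pran_subset ⟨_, hyy, rfl⟩)⟩
    simp only [Prod.mk.injEq] at hkyy
    obtain ⟨rfl, rfl⟩ := hkyy
    obtain rfl : k = 0 := by
      by_contra hk0
      exact hyF ⟨k, ⟨Nat.pos_of_ne_zero hk0, hk⟩, rfl⟩
    refine Or.inr (Or.inl ⟨1, ⟨le_rfl, hb.one_le⟩, rfl, Or.inl ⟨rfl, ?_⟩⟩)
    rw [xOccurrences_cons_inr]
    omega
  · rcases hyy with hyy | ⟨k, hk, hkyy⟩
    · exact absurd (hb.pdom_subset ⟨_, hyy, rfl⟩) (hb.notMem i hi)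
    simp only [Prod.mk.injEq] at hkyy
    obtain ⟨hki, rfl⟩ := hkyy
    rw [hb.eq_of_apply_eq (Set.mem_Iic.mp hk |>.trans j.le_succ) (hi.2.trans j.le_succ)
      (Or.inr hi) hki]
    rcases hdir with ⟨-, hiv⟩ | ⟨hhead, -⟩
    · refine Or.inr (Or.inl ⟨i + 1, ⟨by omega, by omega⟩, rfl, Or.inl ⟨rfl, ?_⟩⟩)
      rw [xOccurrences_cons_inr]
      omega
    · cases (hv _ hhead : true = false)
  · exact absurd (hb.pdom_union_subset ⟨_, hyy, rfl⟩) (by rintro (h | h) <;> contradiction)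

lemma bridgeState_cons_inr_false (hb : FreshBridge s c j D GS)
    (hv : ∀ l ∈ v.head?, CompatLetters (Sum.inr false) l) (hj : xOccurrences v + 1 ≤ j)
    (hyy : (y', y) ∈ s ∪ bridgePairs c j) (h : BridgeState s c j D n v y) :
    BridgeState s c j D n (Sum.inr false :: v) y' := by
  rcases h with ⟨hw, hyF⟩ | ⟨i, hi, rfl, hdir⟩ | ⟨hyD, hyF, -⟩
  · rcases hyy with hyy | ⟨k, hk, hkyy⟩
    · exact Or.inl ⟨⟨y, hw, hyy⟩,
        hb.notMem_image_of_mem (hb.pdom_subset ⟨_, hyy, rfl⟩)⟩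
    simp only [Prod.mk.injEq] at hkyy
    obtain ⟨rfl, rfl⟩ := hkyy
    obtain rfl : k = j := by
      by_contra hkj
      exact hyF ⟨k + 1, ⟨by omega, by simp only [Set.mem_Iic] at hk; omega⟩, rfl⟩
    refine Or.inr (Or.inl ⟨k, ⟨hb.one_le, le_rfl⟩, rfl, Or.inr ⟨rfl, ?_⟩⟩)
    rw [xOccurrences_cons_inr]
    omega
  · rcases hyy with hyy | ⟨k, hk, hkyy⟩
    · exact absurd (hb.pran_subset ⟨_, hyy, rfl⟩) (hb.notMem i hi)
    simp only [Prod.mk.injEq] at hkyy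
    obtain ⟨rfl, hki⟩ := hkyy
    have hk' := hb.eq_of_apply_eq (by simp only [Set.mem_Iic] at hk; omega)
      (hi.2.trans j.le_succ) (Or.inr hi) hki
    obtain ⟨hi1, hij⟩ := hi
    rcases hdir with ⟨hhead, -⟩ | ⟨-, hiv⟩
    · cases (hv _ hhead : false = true)
    · refine Or.inr (Or.inl ⟨k, ⟨?_, ?_⟩, rfl, Or.inr ⟨rfl, ?_⟩⟩)
      · omega
      · omega
      rw [xOccurrences_cons_inr]
      omega
  · exact absurd (hb.pran_union_subset ⟨_, hyy, rfl⟩) (by rintro (h | h) <;> contradiction)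

theorem bridgeState_of_wordRel (hb : FreshBridge s c j D GS) (hn : n ∈ D) :
    ∀ (v : Word) {y : ℕ}, v.IsChain CompatLetters → (∀ g, Sum.inl g ∈ v → g ∈ GS) →
      xOccurrences v ≤ j → wordRel (s ∪ bridgePairs c j) v n y → BridgeState s c j D n v y
  | [], _, _, _, _, h => Or.inl ⟨h, h ▸ hb.notMem_image_of_mem hn⟩
  | l :: v, y, hch, hGS, hj, ⟨z, hz, hzy⟩ => by
    have ih := bridgeState_of_wordRel hb hn v hch.tail
      (fun g hg => hGS g (List.mem_cons_of_mem _ hg))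
      ((List.sublist_cons_self l v).countP_le.trans hj) hz
    have hv := (List.isChain_cons.mp hch).1
    rcases l with g | _ | _
    · exact hzy ▸ hb.bridgeState_cons_inl hn (hGS g List.mem_cons_self) hv ih
    · exact hb.bridgeState_cons_inr_false hv (xOccurrences_cons_inr _ v ▸ hj) hzy ih
    · exact hb.bridgeState_cons_inr_true hv (xOccurrences_cons_inr _ v ▸ hj) hzy ih

end FreshBridge

end BridgeWalks

section BridgeFixedPoints

namespace FreshBridge

variable {s : Set (ℕ × ℕ)} {c : ℕ → ℕ} {j : ℕ} {D : Set ℕ} {GS : Set Perm'} {i : ℕ}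

lemma wordRel_replicate_of_mem (hb : FreshBridge s c j D GS) (hi : i ∈ Set.Icc 1 j) {m y : ℕ}
    (him : i + m ≤ j + 1)
    (h : wordRel (s ∪ bridgePairs c j) (List.replicate m (Sum.inr true)) (c i) y) :
    y = c (i + m) := by
  obtain ⟨hi1, hij⟩ := hi
  induction m generalizing y with
  | zero => exact h.symm
  | succ m ih =>
    obtain ⟨z, hz, hzy⟩ := h
    rw [ih (by omega) hz] at hzy
    rcases hzy with hzy | ⟨k, hk, hkz⟩
    · exact absurd (hb.pdom_subset ⟨_, hzy, rfl⟩) (hb.notMem _ ⟨by omega, by omega⟩)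
    simp only [Prod.mk.injEq] at hkz
    rw [← hkz.2, hb.eq_of_apply_eq (by simp only [Set.mem_Iic] at hk; omega) (by omega)
      (Or.inr ⟨by omega, by omega⟩) hkz.1, Nat.add_assoc]

/-- The walk would have to leave the bridge at `c (j + 1)` and re-enter it through `c 0`, which
takes at least `j + 1` letters. -/
lemma not_wordRel_replicate_self (hb : FreshBridge s c j D GS) (hi : i ∈ Set.Icc 1 j) {k : ℕ}
    (hk : 0 < k) (hkj : k ≤ j) :
    ¬ wordRel (s ∪ bridgePairs c j) (List.replicate k (Sum.inr true)) (c i) (c i) := by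
  intro h
  obtain ⟨hi1, hij⟩ := hi
  rcases le_or_gt k (j + 1 - i) with hk' | hk'
  · have := hb.eq_of_apply_eq (k := i + k) (by omega) (by omega) (Or.inr ⟨hi1, hij⟩)
      (hb.wordRel_replicate_of_mem ⟨hi1, hij⟩ (by omega) h).symm
    omega
  obtain ⟨m, hm⟩ : ∃ m, k - (j + 1 - i) = m + 1 := ⟨k - (j + 1 - i) - 1, by omega⟩
  rw [show k = (m + 1) + (j + 1 - i) by omega, List.replicate_add, wordRel_append] at h
  obtain ⟨z, hz, hzi⟩ := h
  rw [hb.wordRel_replicate_of_mem ⟨hi1, hij⟩ (by omega) hz,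
    show i + (j + 1 - i) = j + 1 by omega] at hzi
  rcases hb.bridgeState_of_wordRel hb.end_mem (List.replicate (m + 1) (Sum.inr true))
    (List.isChain_replicate_of_rel _ rfl)
    (by simp [List.mem_replicate]) (by rw [xOccurrences_replicate]; omega) hzi with
    ⟨-, hF⟩ | ⟨i', hi', hii', hdir⟩ | ⟨-, -, g, hg⟩
  · exact hF ⟨i, ⟨hi1, hij⟩, rfl⟩
  · obtain rfl := hb.injOn ⟨hi1, hij⟩ hi' hii'
    rcases hdir with ⟨-, h⟩ | ⟨h, -⟩
    · rw [xOccurrences_replicate] at h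
      omega
    · simp [List.replicate_succ] at h
  · simp [List.replicate_succ] at hg

theorem wordFix_union (hb : FreshBridge s c j D GS) {G : Subgroup Perm'} {w : Word}
    (hw : IsNice G w) (hGS : ∀ g, Sum.inl g ∈ w → g ∈ GS) (hwj : xOccurrences w ≤ j) :
    wordFix (s ∪ bridgePairs c j) w = wordFix s w := by
  refine Set.Subset.antisymm (fun n hn => ?_) fun n hn => wordRel_mono Set.subset_union_left w hn
  rcases hb.pdom_union_subset (mem_pdom_of_wordRel_of_getLast? hn hw.getLast?) with
    hnD | ⟨i, hi, rfl⟩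
  · rcases hb.bridgeState_of_wordRel hnD w hw.isChain hGS hwj hn with
      ⟨h, -⟩ | ⟨i, hi, rfl, -⟩ | ⟨hnD', -⟩
    · exact h
    · exact absurd hnD (hb.notMem i hi)
    · exact absurd hnD hnD'
  exfalso
  rcases hw.eq_replicate_or_eq_cons with ⟨k, hk, rfl⟩ | ⟨g, w₁, σ, rfl, hw₁⟩
  · exact hb.not_wordRel_replicate_self hi hk (by rwa [xOccurrences_replicate] at hwj) hn
  -- a group letter never maps `D` or the bridge into the bridge
  obtain ⟨z, hz, hzi⟩ := hn
  have hg : g ∈ GS := hGS g List.mem_cons_self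
  obtain ⟨w₂, rfl⟩ := List.head?_eq_some_iff.mp hw₁
  have hzDF : z ∈ D ∪ c '' Set.Icc 1 j := by
    obtain ⟨u, -, hu⟩ := hz
    cases σ
    · exact hb.pdom_union_subset ⟨_, hu, rfl⟩
    · exact hb.pran_union_subset ⟨_, hu, rfl⟩
  rcases hzDF with hzD | ⟨i', hi', rfl⟩
  · apply hb.inv_apply_notMem g hg i hi
    rwa [← hzi, Equiv.Perm.coe_inv, Equiv.symm_apply_apply]
  · exact hb.apply_notMem g hg i' hi' (Or.inr ⟨i, hi, hzi.symm⟩)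

end FreshBridge

end BridgeFixedPoints

section ClosedOrbitsOfExtension

variable {s u : Set (ℕ × ℕ)} {C : Set ℕ} {m n : ℕ}

lemma relOrbit_union_eq
    (h : ∀ z ∈ u, z.1 ∉ relOrbit (sRel s) n ∧ z.2 ∉ relOrbit (sRel s) n) :
    relOrbit (sRel (s ∪ u)) n = relOrbit (sRel s) n := by
  refine relOrbit_eq_of_relClosed (mem_relOrbit_self _ n) ?_
    (relOrbit_mono (fun _ _ hab => Or.inl hab) n)
  rintro a b (hab | hab)
  · exact relClosed_relOrbit _ n a b hab
  · exact iff_of_false (h _ hab).1 (h _ hab).2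

lemma relOrbit_union_eq_of_subset (hmC : relOrbit (sRel s) m ⊆ C)
    (hu : ∀ z ∈ u, z.1 ∈ C ∧ z.2 ∈ C)
    (hnew : ∀ x ∈ C, x ∈ pdom s ∪ pran s → x ∈ relOrbit (sRel s) m)
    (hCm : C ⊆ relOrbit (sRel (s ∪ u)) m) :
    relOrbit (sRel (s ∪ u)) m = C := by
  refine relOrbit_eq_of_relClosed (hmC (mem_relOrbit_self _ m)) ?_ hCm
  rintro a b (hab | hab)
  · have hO := relClosed_relOrbit (sRel s) m a b hab
    exact ⟨fun ha => hmC (hO.1 (hnew a ha (Or.inl ⟨_, hab, rfl⟩))),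
      fun hb => hmC (hO.2 (hnew b hb (Or.inr ⟨_, hab, rfl⟩)))⟩
  · exact ⟨fun _ => (hu _ hab).2, fun _ => (hu _ hab).1⟩

theorem relClosedOrbits_union_eq_insert
    (hm : relOrbit (sRel s) m ∉ relClosedOrbits (sRel s)) (hmC : relOrbit (sRel s) m ⊆ C)
    (hu : ∀ z ∈ u, z.1 ∈ C ∧ z.2 ∈ C)
    (hnew : ∀ x ∈ C, x ∈ pdom s ∪ pran s → x ∈ relOrbit (sRel s) m)
    (hC : C ⊆ relDom (sRel (s ∪ u)) ∩ relRan (sRel (s ∪ u)))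
    (hCm : C ⊆ relOrbit (sRel (s ∪ u)) m) :
    relClosedOrbits (sRel (s ∪ u)) = insert C (relClosedOrbits (sRel s)) := by
  have hCorb := relOrbit_union_eq_of_subset hmC hu hnew hCm
  ext Q
  constructor
  · rintro ⟨⟨n, rfl⟩, hQ⟩
    by_cases hn : n ∈ C
    · rw [← hCorb] at hn ⊢
      exact Or.inl (relOrbit_eq_of_mem hn)
    have hdisj : ∀ x ∈ relOrbit (sRel (s ∪ u)) n, x ∉ C := fun x hx hxC => hn <| by
      rw [← hCorb] at hxC ⊢
      rw [← relOrbit_eq_of_mem hxC, relOrbit_eq_of_mem hx]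
      exact mem_relOrbit_self _ n
    have hsub := relOrbit_mono (fun _ _ hab => Or.inl hab) n (R := sRel s) (R' := sRel (s ∪ u))
    refine Or.inr ⟨⟨n, relOrbit_union_eq fun z hz =>
      ⟨fun h => hdisj _ (hsub h) (hu z hz).1, fun h => hdisj _ (hsub h) (hu z hz).2⟩⟩,
      fun x hx => ?_⟩
    obtain ⟨⟨b, hb | hb⟩, ⟨a, ha | ha⟩⟩ := hQ hx
    · exact ⟨⟨b, hb⟩, ⟨a, ha⟩⟩
    · exact absurd (hu _ ha).2 (hdisj x hx)
    all_goals exact absurd (hu _ hb).1 (hdisj x hx)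
  · rintro (rfl | ⟨⟨n, rfl⟩, hQ⟩)
    · exact ⟨⟨m, hCorb.symm⟩, hC⟩
    -- an old closed orbit meeting `C` would meet the orbit of `m`, hence be it
    have hdisj : ∀ x ∈ relOrbit (sRel s) n, x ∉ C := fun x hx hxC => hm <| by
      have hxm := hnew x hxC (Or.inl (relDom_sRel s ▸ (hQ hx).1))
      rw [← relOrbit_eq_of_mem hxm, relOrbit_eq_of_mem hx]
      exact ⟨⟨n, rfl⟩, hQ⟩
    refine ⟨⟨n, (relOrbit_union_eq fun z hz =>
      ⟨fun h => hdisj _ h (hu z hz).1, fun h => hdisj _ h (hu z hz).2⟩).symm⟩,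
      fun x hx => ?_⟩
    obtain ⟨⟨b, hb⟩, ⟨a, ha⟩⟩ := hQ hx
    exact ⟨⟨b, Or.inl hb⟩, ⟨a, Or.inl ha⟩⟩

end ClosedOrbitsOfExtension

section FreshPoints

variable {GS : Set Perm'}

lemma exists_fresh_point {K : Set ℕ} (hK : K.Finite) (hGS : GS.Finite)
    (hfix : ∀ g ∈ GS, {n : ℕ | g n = n}.Finite) :
    ∃ y ∉ K, ∀ g ∈ GS, g y ∉ K ∧ g y ≠ y ∧ g⁻¹ y ∉ K := by
  have hbad : (K ∪ ⋃ g ∈ GS, (g ⁻¹' K ∪ ⇑g⁻¹ ⁻¹' K ∪ {n | g n = n})).Finite :=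
    hK.union (hGS.biUnion fun g hg => ((hK.preimage g.injective.injOn).union
      (hK.preimage g⁻¹.injective.injOn)).union (hfix g hg))
  obtain ⟨y, hy⟩ := hbad.infinite_compl.nonempty
  simp only [Set.mem_compl_iff, Set.mem_union, Set.mem_iUnion, Set.mem_preimage,
    Set.mem_ofPred_eq, not_or, not_exists] at hy
  exact ⟨y, hy.1, fun g hg => have h := hy.2 g hg; ⟨h.1.1, h.2, h.1.2⟩⟩

lemma exists_fresh (B : Set ℕ) (hB : B.Finite) (hGS : GS.Finite)
    (hfix : ∀ g ∈ GS, {n : ℕ | g n = n}.Finite) (j : ℕ) :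
    ∃ f : ℕ → ℕ, Set.InjOn f (Set.Icc 1 j) ∧ ∀ i ∈ Set.Icc 1 j, f i ∉ B ∧
      ∀ g ∈ GS, g (f i) ∉ B ∪ f '' Set.Icc 1 j ∧ g⁻¹ (f i) ∉ B := by
  induction j with
  | zero => exact ⟨id, by simp, by simp⟩
  | succ j ih =>
    classical
    obtain ⟨f, hinj, hf⟩ := ih
    obtain ⟨y, hyK, hy⟩ := exists_fresh_point (hB.union ((Set.finite_Icc 1 j).image f)) hGS hfix
    have hIcc : Set.Icc 1 (j + 1) = insert (j + 1) (Set.Icc 1 j) :=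
      (Set.insert_Icc_right_eq_Icc_add_one (by omega)).symm
    have hj : j + 1 ∉ Set.Icc 1 j := fun h => by simp at h
    have heqOn : Set.EqOn (Function.update f (j + 1) y) f (Set.Icc 1 j) :=
      fun i hi => Function.update_of_ne (by rintro rfl; exact hj hi) _ _
    refine ⟨Function.update f (j + 1) y, ?_, ?_⟩
    · rw [hIcc, Set.injOn_insert hj, heqOn.injOn_iff, Function.update_self, heqOn.image_eq]
      exact ⟨hinj, fun h => hyK (Or.inr h)⟩
    rw [hIcc, Set.image_insert_eq, Function.update_self, heqOn.image_eq, Set.forall_mem_insert,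
      Function.update_self]
    refine ⟨⟨fun h => hyK (Or.inl h),
      fun g hg => ⟨?_, fun h => (hy g hg).2.2 (Or.inl h)⟩⟩, fun i hi => ?_⟩
    · rintro (h | h | h)
      · exact (hy g hg).1 (Or.inl h)
      · exact (hy g hg).2.1 h
      · exact (hy g hg).1 (Or.inr h)
    rw [heqOn hi]
    obtain ⟨hfB, hfg⟩ := hf i hi
    refine ⟨hfB, fun g hg => ⟨?_, (hfg g hg).2⟩⟩
    rintro (h | h | h)
    · exact (hfg g hg).1 (Or.inl h)
    · exact (hy g hg).2.2 (Or.inr ⟨i, hi, by simp [← h]⟩)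
    · exact (hfg g hg).1 (Or.inr h)

end FreshPoints

section Coding

/-- `min (ℕ \ ⋃ O^c_s)` in the paper's notation. -/
def minOpen (s : Set (ℕ × ℕ)) : ℕ := sInf {n : ℕ | n ∉ ⋃₀ relClosedOrbits (sRel s)}

variable {s t : Set (ℕ × ℕ)} {C : Set ℕ} {r : ℕ → Fin 2}

lemma minOpen_notMem (hs : s.Finite) : minOpen s ∉ ⋃₀ relClosedOrbits (sRel s) :=
  Nat.sInf_mem (sUnion_relClosedOrbits_sRel_finite hs).infinite_compl.nonempty

lemma relOrbit_minOpen_notMem (hs : s.Finite) :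
    relOrbit (sRel s) (minOpen s) ∉ relClosedOrbits (sRel s) :=
  fun h => minOpen_notMem hs ⟨_, h, mem_relOrbit_self _ _⟩

lemma minOpen_le_of_mem_relOrbit {x : ℕ} (hs : s.Finite)
    (hx : x ∈ relOrbit (sRel s) (minOpen s)) : minOpen s ≤ x := by
  by_contra! hlt
  obtain ⟨P, hP, hxP⟩ := not_not.mp (Nat.notMem_of_lt_sInf hlt)
  obtain ⟨n, rfl⟩ := hP.1
  refine relOrbit_minOpen_notMem hs ?_
  rwa [← relOrbit_eq_of_mem hx, relOrbit_eq_of_mem hxP]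

lemma niceInj_of_relClosedOrbits_eq_insert (hnice : NiceInj s)
    (ht : relClosedOrbits (sRel t) = insert C (relClosedOrbits (sRel s)))
    (htfin : t.Finite) (hC : minOpen s ∈ C) (hCle : ∀ x ∈ C, minOpen s ≤ x) :
    NiceInj t := by
  have hlt : minOpen s < minOpen t := by
    have h := minOpen_notMem htfin
    rw [ht, Set.sUnion_insert] at h
    refine lt_of_le_of_ne (Nat.sInf_le fun h' => h (Or.inr h')) fun heq => h (Or.inl (heq ▸ hC))
  intro O hO
  rw [ht] at hO
  rcases hO with rfl | hO
  · exact (Nat.sInf_le hC).trans_lt hlt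
  · exact (hnice O hO).trans hlt

lemma codesReal_of_relClosedOrbits_eq_insert (hcodes : CodesReal s r)
    (ht : relClosedOrbits (sRel t) = insert C (relClosedOrbits (sRel s)))
    (hlt : ∀ P ∈ relClosedOrbits (sRel s), sInf P < sInf C)
    (hC : C.ncard % 2 = r (relClosedOrbits (sRel s)).ncard) : CodesReal t r := by
  intro O hO
  rw [ht] at hO
  rcases hO with rfl | hO
  · have hidx : orbitIndex t O = (relClosedOrbits (sRel s)).ncard := by
      refine congrArg Set.ncard (Set.ext fun P => ?_)
      rw [Set.mem_sep_iff, ht]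
      exact ⟨fun ⟨hP, hPO⟩ => hP.resolve_left (by rintro rfl; exact lt_irrefl _ hPO),
        fun hP => ⟨Or.inr hP, hlt P hP⟩⟩
    rw [hidx]
    exact hC
  · have hidx : orbitIndex t O = orbitIndex s O := by
      refine congrArg Set.ncard (Set.ext fun P => ?_)
      rw [Set.mem_sep_iff, Set.mem_sep_iff, ht]
      exact ⟨fun ⟨hP, hPO⟩ =>
        ⟨hP.resolve_left (by rintro rfl; exact (hlt O hO).not_gt hPO), hPO⟩,
        fun ⟨hP, hPO⟩ => ⟨Or.inr hP, hPO⟩⟩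
    rw [hidx]
    exact hcodes O hO

end Coding

section Construction

variable {s : Set (ℕ × ℕ)} {c : ℕ → ℕ} {j : ℕ} {D : Set ℕ} {GS : Set Perm'}

lemma exists_freshBridge (hD : D.Finite) (hdom : pdom s ⊆ D) (hran : pran s ⊆ D) {a b : ℕ}
    (ha : a ∈ D) (hb : b ∈ D) (ha' : a ∉ pdom s) (hb' : b ∉ pran s) (hGS : GS.Finite)
    (hfix : ∀ g ∈ GS, {n : ℕ | g n = n}.Finite) (hj : 1 ≤ j) {B : Set ℕ} (hB : B.Finite) :
    ∃ c, FreshBridge s c j D GS ∧ c 0 = a ∧ c (j + 1) = b ∧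
      ∀ i ∈ Set.Icc 1 j, c i ∉ B := by
  obtain ⟨f, hinj, hf⟩ := exists_fresh (D ∪ B) (hD.union hB) hGS hfix j
  set c : ℕ → ℕ := fun i => if i = 0 then a else if i = j + 1 then b else f i
  have hcf : Set.EqOn c f (Set.Icc 1 j) := fun i ⟨hi1, hij⟩ => by
    simp only [c, if_neg (show i ≠ 0 by omega), if_neg (show i ≠ j + 1 by omega)]
  have hcb : c (j + 1) = b := by simp [c]
  refine ⟨c, ⟨hj, hdom, hran, ha, hcb ▸ hb, ha', hcb ▸ hb', fun i hi h => ?_,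
    hcf.injOn_iff.mpr hinj, fun g hg i hi h => ?_, fun g hg i hi h => ?_⟩, rfl, hcb,
    fun i hi h => ?_⟩
  · exact (hf i hi).1 (Or.inl (hcf hi ▸ h))
  · rw [hcf hi, hcf.image_eq] at h
    exact ((hf i hi).2 g hg).1 (h.imp_left Or.inl)
  · exact ((hf i hi).2 g hg).2 (Or.inl (hcf hi ▸ h))
  · exact (hf i hi).1 (Or.inr (hcf hi ▸ h))

lemma bridge_mem_relOrbit {m : ℕ} (hc0 : c 0 ∈ relOrbit (sRel s) m) {i : ℕ}
    (hi : i ≤ j + 1) :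
    c i ∈ relOrbit (sRel (s ∪ bridgePairs c j)) m := by
  induction i with
  | zero => exact relOrbit_mono (fun _ _ h => Or.inl h) m hc0
  | succ i ih =>
    exact (relClosed_relOrbit _ m _ _ (Or.inr ⟨i, Set.mem_Iic.mpr (by omega), rfl⟩)).1
      (ih (by omega))

namespace FreshBridge

theorem relClosedOrbits_union (hb : FreshBridge s c j D GS) {p : ℕ → ℕ} {q m : ℕ}
    (hp : ∀ i < q, (p i, p (i + 1)) ∈ s) (hO : relOrbit (sRel s) m = p '' Set.Iic q)
    (hm : relOrbit (sRel s) m ∉ relClosedOrbits (sRel s)) (hc0 : c 0 = p q)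
    (hcj : c (j + 1) = p 0) :
    relClosedOrbits (sRel (s ∪ bridgePairs c j)) =
      insert (relOrbit (sRel s) m ∪ c '' Set.Icc 1 j) (relClosedOrbits (sRel s)) := by
  have hc0O : c 0 ∈ relOrbit (sRel s) m := hO ▸ hc0 ▸ ⟨q, Set.mem_Iic.mpr le_rfl, rfl⟩
  have hcO : ∀ i ≤ j + 1, c i ∈ relOrbit (sRel s) m ∪ c '' Set.Icc 1 j := fun i hi => by
    rcases Nat.eq_zero_or_pos i with rfl | hi0
    · exact Or.inl hc0O
    rcases hi.lt_or_eq with hij | rfl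
    · exact Or.inr ⟨i, ⟨hi0, by omega⟩, rfl⟩
    · exact Or.inl (hO ▸ hcj ▸ ⟨0, Nat.zero_le q, rfl⟩)
  refine relClosedOrbits_union_eq_insert hm Set.subset_union_left ?_ ?_ ?_ ?_
  · rintro _ ⟨i, hi, rfl⟩
    exact ⟨hcO i (by simp only [Set.mem_Iic] at hi; omega), hcO (i + 1) (by simpa using hi)⟩
  · rintro x (hx | ⟨i, hi, rfl⟩) hxs
    · exact hx
    · exact absurd (hxs.elim (hb.pdom_subset ·) (hb.pran_subset ·)) (hb.notMem i hi)
  · rintro x (hx | ⟨i, ⟨hi1, hij⟩, rfl⟩)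
    · rw [hO] at hx
      obtain ⟨k, hk, rfl⟩ := hx
      refine ⟨?_, ?_⟩
      · rcases (Set.mem_Iic.mp hk).lt_or_eq with hkq | rfl
        · exact ⟨_, Or.inl (hp k hkq)⟩
        · exact ⟨c 1, Or.inr ⟨0, Nat.zero_le j, by simp [hc0]⟩⟩
      · rcases Nat.eq_zero_or_pos k with rfl | hk0
        · exact ⟨c j, Or.inr ⟨j, Set.mem_Iic.mpr le_rfl, by simp [hcj]⟩⟩
        · obtain ⟨k, rfl⟩ := Nat.exists_eq_add_one_of_ne_zero hk0.ne'
          exact ⟨p k, Or.inl (hp k (by simpa using hk))⟩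
    · obtain ⟨i, rfl⟩ := Nat.exists_eq_add_one_of_ne_zero (by omega : i ≠ 0)
      exact ⟨⟨c (i + 2), Or.inr ⟨i + 1, hij, rfl⟩⟩,
        ⟨c i, Or.inr ⟨i, Set.mem_Iic.mpr (by omega), rfl⟩⟩⟩
  · rintro x (hx | ⟨i, hi, rfl⟩)
    · exact relOrbit_mono (fun _ _ h => Or.inl h) m hx
    · exact bridge_mem_relOrbit hc0O (hi.2.trans j.le_succ)

lemma ncard_union_image (hb : FreshBridge s c j D GS) {O : Set ℕ} (hOD : O ⊆ D)
    (hO : O.Finite) : (O ∪ c '' Set.Icc 1 j).ncard = O.ncard + j := by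
  rw [Set.ncard_union_eq (Set.disjoint_left.mpr fun x hx => hb.notMem_image_of_mem (hOD hx)) hO
    ((Set.finite_Icc 1 j).image c), hb.injOn.ncard_image, Set.ncard_Icc_nat, Nat.add_sub_cancel]

end FreshBridge

theorem exists_extension_closing_relOrbit (hs : PartInj s) (hsfin : s.Finite) {m : ℕ}
    (hm : relOrbit (sRel s) m ∉ relClosedOrbits (sRel s)) (hGS : GS.Finite)
    (hfix : ∀ g ∈ GS, {n : ℕ | g n = n}.Finite) (hj : 1 ≤ j) {B : Set ℕ} (hB : B.Finite) :
    ∃ t C, s ⊆ t ∧ t.Finite ∧ PartInj t ∧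
      relClosedOrbits (sRel t) = insert C (relClosedOrbits (sRel s)) ∧
      relOrbit (sRel s) m ⊆ C ∧ (∀ x ∈ C, x ∉ relOrbit (sRel s) m → x ∉ B) ∧
      C.ncard = (relOrbit (sRel s) m).ncard + j ∧
      ∀ (G : Subgroup Perm') (w : Word), IsNice G w → (∀ g, Sum.inl g ∈ w → g ∈ GS) →
        xOccurrences w ≤ j → wordFix t w = wordFix s w := by
  obtain ⟨p, q, hp, hp0, hpq, hO⟩ := exists_path_of_notMem_relClosedOrbits hs hsfin hm
  have hpO : ∀ i ≤ q, p i ∈ relOrbit (sRel s) m := fun i hi => by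
    rw [hO]
    exact ⟨i, hi, rfl⟩
  obtain ⟨c, hb, hc0, hcj, hcB⟩ := exists_freshBridge
    (((hsfin.image _).union (hsfin.image _)).union (relOrbit_sRel_finite hsfin m))
    (fun x hx => Or.inl (Or.inl hx)) (fun x hx => Or.inl (Or.inr hx)) (Or.inr (hpO q le_rfl))
    (Or.inr (hpO 0 (Nat.zero_le q))) hpq hp0 hGS hfix hj hB
  refine ⟨s ∪ bridgePairs c j, relOrbit (sRel s) m ∪ c '' Set.Icc 1 j, Set.subset_union_left,
    hsfin.union ((Set.finite_Iic j).image _), hb.partInj_union hs,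
    hb.relClosedOrbits_union hp hO hm hc0 hcj, Set.subset_union_left, ?_,
    hb.ncard_union_image (fun x hx => Or.inr hx) (relOrbit_sRel_finite hsfin m),
    fun _ _ hw hGSw hwj => hb.wordFix_union hw hGSw hwj⟩
  rintro x (hx | ⟨i, hi, rfl⟩) hxO
  · exact absurd hx hxO
  · exact hcB i hi

end Construction

lemma setOf_inl_mem_finite {E : Set Word} (hE : E.Finite) :
    {g : Perm' | ∃ w ∈ E, Sum.inl g ∈ w}.Finite := by
  have hunion : {g : Perm' | ∃ w ∈ E, Sum.inl g ∈ w} = ⋃ w ∈ E, Sum.inl ⁻¹' {l | l ∈ w} := by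
    ext g
    simp
  rw [hunion]
  exact hE.biUnion fun w _ => w.finite_toSet.preimage Sum.inl_injective.injOn

/-- Generic coding: any condition of `Z_G(r)` can be extended to a condition
with strictly more closed orbits. -/
theorem statement8 (G : Subgroup Perm') (hG : Cofinitary G) (r : ℕ → Fin 2)
    (s : Set (ℕ × ℕ)) (E : Set Word) (hc : ZrCond G r s E) :
    ∃ t : Set (ℕ × ℕ), ZrCond G r t E ∧ ZLe t E s E ∧
      (relClosedOrbits (sRel s)).ncard < (relClosedOrbits (sRel t)).ncard := by
  obtain ⟨⟨hsfin, hs, hEfin, hEnice⟩, hnice, hcodes⟩ := hc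
  set O := relOrbit (sRel s) (minOpen s)
  set N := (relClosedOrbits (sRel s)).ncard
  obtain ⟨M, hM⟩ := (hEfin.image xOccurrences).bddAbove
  -- `M ≤ j` keeps the words of `E` from winding around the new closed orbit, which will have
  -- `O.ncard + j` points and must code `r N`
  obtain ⟨j, hjM, hj, hpar⟩ : ∃ j, M ≤ j ∧ 1 ≤ j ∧ (O.ncard + j) % 2 = r N :=
    have := (r N).isLt
    ⟨M + 1 + (O.ncard + M + 1 + r N) % 2, by omega, by omega, by omega⟩
  have hfix : ∀ g ∈ {g : Perm' | ∃ w ∈ E, Sum.inl g ∈ w}, {n : ℕ | g n = n}.Finite :=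
    fun g ⟨w, hw, hg⟩ => have h := (hEnice w hw).mem_of_inl_mem hg; hG g h.1 h.2
  obtain ⟨t, C, hst, htfin, ht, hco, hOC, hCB, hCcard, hfixE⟩ :=
    exists_extension_closing_relOrbit hs hsfin (relOrbit_minOpen_notMem hsfin)
      (setOf_inl_mem_finite hEfin) hfix hj (Set.finite_Iic (minOpen s))
  have hC : minOpen s ∈ C := hOC (mem_relOrbit_self _ _)
  have hCle : ∀ x ∈ C, minOpen s ≤ x := fun x hx => by
    by_cases hxO : x ∈ O
    · exact minOpen_le_of_mem_relOrbit hsfin hxO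
    · exact (not_le.mp (hCB x hx hxO)).le
  refine ⟨t, ⟨⟨htfin, ht, hEfin, hEnice⟩,
      niceInj_of_relClosedOrbits_eq_insert hnice hco htfin hC hCle,
      codesReal_of_relClosedOrbits_eq_insert hcodes hco
        (fun P hP => (hnice P hP).trans_le (le_csInf ⟨_, hC⟩ hCle)) (hCcard ▸ hpar)⟩,
    ⟨hst, subset_rfl, fun w hw => hfixE G w (hEnice w hw) (fun g hg => ⟨w, hw, hg⟩)
      ((hM ⟨w, hw, rfl⟩).trans hjM)⟩, ?_⟩
  rw [hco, Set.ncard_insert_of_notMem (fun h => minOpen_notMem hsfin ⟨_, h, hC⟩)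
    (relClosedOrbits_sRel_finite hsfin)]
  exact Nat.lt_succ_self N

end
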